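/- arXiv:2605.20862 — 4 statements merged into one kernel-verified Lean document; each statement's English description precedes it below -/
import Mathlib

section
/- Let T be a finite tree and let T' be obtained from T by attaching one new pendant edge at a vertex v of T (adding one new vertex adjacent only to v). If λ_max(R_T) > 0, then λ_max(R_{T'}) > 0. -/
open Finset Matrix

/-- The Ricci matrix of a graph, indexed by edges: diagonal entry `-(1/d_x + 1/d_y)`
for an edge `{x,y}`, entry `1/d_z` for distinct edges sharing the vertex `z`, and `0`
for disjoint edges.  Here the degree of `v` is `(G.neighborSet v).ncard`. -/
noncomputable def ricciMatrix {V : Type*} (G : SimpleGraph V) [Fintype V] [DecidableEq V] :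
    Matrix G.edgeSet G.edgeSet ℝ := fun e f =>
  if (e : Sym2 V) = (f : Sym2 V) then
    -∑ v : V, if v ∈ (e : Sym2 V) then 1 / ((G.neighborSet v).ncard : ℝ) else 0
  else
    ∑ v : V, if v ∈ (e : Sym2 V) ∧ v ∈ (f : Sym2 V) then 1 / ((G.neighborSet v).ncard : ℝ) else 0

/-- The largest eigenvalue of a real matrix. -/
noncomputable def lambdaMax {n : Type*} [Fintype n] (M : Matrix n n ℝ) : ℝ :=
  sSup {t : ℝ | ∃ w : n → ℝ, w ≠ 0 ∧ M.mulVec w = t • w}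

/-- The graph obtained from `G` by attaching one new pendant vertex (`none`) adjacent
only to the vertex `v`. -/
def attachPendant {V : Type*} (G : SimpleGraph V) (v : V) : SimpleGraph (Option V) where
  Adj x y := match x, y with
    | none, none => False
    | none, some b => b = v
    | some a, none => a = v
    | some a, some b => G.Adj a b
  symm := ⟨by
    rintro (_ | a) (_ | b) h
    · exact h
    · exact h
    · exact h
    · exact G.adj_symm h⟩
  loopless := ⟨by
    rintro (_ | a) h
    · exact h
    · exact G.irrefl h⟩

instance {V : Type*} (G : SimpleGraph V) [DecidableEq V] [DecidableRel G.Adj] (v : V) :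
    DecidableRel (attachPendant G v).Adj := fun x y =>
  match x, y with
  | none, none => isFalse id
  | none, some b => inferInstanceAs (Decidable (b = v))
  | some a, none => inferInstanceAs (Decidable (a = v))
  | some a, some b => inferInstanceAs (Decidable (G.Adj a b))

/-!
The Ricci quadratic form splits over vertices:
`x ⬝ᵥ R_G x = ∑ u, ((∑_{e ∋ u} x e)² - 2 ∑_{e ∋ u} (x e)²) / d_u`,
and since `R_G` is symmetric, `λ_max(R_G) > 0` just says that this form takes a positive value.
Extend such an `x` to the new edge by `c = S / (d + 2)`, where `d = d_v` and `S, T` are the sum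
and the sum of squares of `x` over the edges at `v` (this `c` maximises the new form). Only the
terms of `v` and of the new leaf change, and their total grows by
`(2 (d T - S²) + 4 T) / (d (d + 1) (d + 2))`, which is nonnegative by Cauchy–Schwarz.
-/

lemma Matrix.bddAbove_real_eigenvalues {n : Type*} [Fintype n] [DecidableEq n]
    (M : Matrix n n ℝ) :
    BddAbove {t : ℝ | ∃ w : n → ℝ, w ≠ 0 ∧ M *ᵥ w = t • w} := by
  refine ((Module.End.finite_hasEigenvalue (toLin' M)).subset ?_).bddAbove
  rintro t ⟨w, hw, hMw⟩
  exact Module.End.hasEigenvalue_of_hasEigenvector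
    ⟨Module.End.mem_eigenspace_iff.mpr (by simpa using hMw), hw⟩

lemma Matrix.IsHermitian.exists_pos_eigenvalue {n : Type*} [Fintype n] {M : Matrix n n ℝ}
    (hM : M.IsHermitian) {x : n → ℝ} (hx : 0 < x ⬝ᵥ M *ᵥ x) :
    ∃ t : ℝ, 0 < t ∧ ∃ w : n → ℝ, w ≠ 0 ∧ M *ᵥ w = t • w := by
  classical
  by_contra! hle
  have hneg : (-M).PosSemidef := by
    refine hM.neg.posSemidef_iff_eigenvalues_nonneg.mpr <| Pi.le_def.mpr fun j =>
      le_of_not_gt fun hj => ?_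
    have hMw := hM.neg.mulVec_eigenvectorBasis j
    rw [neg_mulVec, neg_eq_iff_eq_neg, ← neg_smul] at hMw
    have hb : ⇑(hM.neg.eigenvectorBasis j) ≠ 0 := fun h =>
      hM.neg.eigenvectorBasis.orthonormal.ne_zero j (by ext i; exact congrFun h i)
    exact hle (-hM.neg.eigenvalues j) (neg_pos.mpr hj) _ hb hMw
  have := hneg.dotProduct_mulVec_nonneg x
  simp only [star_trivial, neg_mulVec, dotProduct_neg] at this
  linarith

lemma lambdaMax_pos_iff {n : Type*} [Fintype n] [DecidableEq n] {M : Matrix n n ℝ}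
    (hM : M.IsHermitian) : 0 < lambdaMax M ↔ ∃ x : n → ℝ, 0 < x ⬝ᵥ M *ᵥ x := by
  constructor
  · intro h
    obtain ⟨t, ⟨w, hw, hMw⟩, ht⟩ :
        ∃ t ∈ {t : ℝ | ∃ w : n → ℝ, w ≠ 0 ∧ M *ᵥ w = t • w}, 0 < t := by
      by_contra! hle
      exact h.not_ge (Real.sSup_nonpos hle)
    have hww : 0 < w ⬝ᵥ w := by simpa using dotProduct_star_self_pos_iff.mpr hw
    exact ⟨w, by rw [hMw, dotProduct_smul, smul_eq_mul]; positivity⟩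
  · rintro ⟨x, hx⟩
    obtain ⟨t, ht, w, hw, hMw⟩ := hM.exists_pos_eigenvalue hx
    exact ht.trans_le (le_csSup (M.bddAbove_real_eigenvalues) ⟨w, hw, hMw⟩)

section VertexForm

variable {ι : Type*}

noncomputable def vertexForm (s : Finset ι) (x : ι → ℝ) : ℝ :=
  ((∑ i ∈ s, x i) ^ 2 - 2 * ∑ i ∈ s, x i ^ 2) / #s

lemma vertexForm_map {κ : Type*} (s : Finset ι) (f : ι ↪ κ) (x : κ → ℝ) :
    vertexForm (s.map f) x = vertexForm s (x ∘ f) := by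
  simp [vertexForm]

lemma vertexForm_singleton (j : ι) (x : ι → ℝ) : vertexForm {j} x = -x j ^ 2 := by
  simp only [vertexForm, sum_singleton, card_singleton, Nat.cast_one, div_one]
  ring

lemma vertexForm_le_insert_add_singleton [DecidableEq ι] {s : Finset ι} {j : ι} (hj : j ∉ s)
    {x : ι → ℝ} (hx : x j = (∑ i ∈ s, x i) / (#s + 2)) :
    vertexForm s x ≤ vertexForm (insert j s) x + vertexForm {j} x := by
  rcases s.eq_empty_or_nonempty with rfl | hs
  · simp [vertexForm, hx]
  have hn : (0 : ℝ) < #s := mod_cast hs.card_pos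
  have hcs := sq_sum_le_card_mul_sum_sq (s := s) (f := x)
  have hT : 0 ≤ ∑ i ∈ s, x i ^ 2 := sum_nonneg fun i _ => sq_nonneg (x i)
  rw [vertexForm_singleton, vertexForm, vertexForm, sum_insert hj, sum_insert hj,
    card_insert_of_notMem hj, hx, Nat.cast_succ, ← sub_nonneg]
  generalize ∑ i ∈ s, x i = S, ∑ i ∈ s, x i ^ 2 = T, (#s : ℝ) = n at *
  calc 0 ≤ (2 * (n * T - S ^ 2) + 4 * T) / (n * (n + 1) * (n + 2)) :=
        div_nonneg (by linarith) (by positivity)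
    _ = _ := by field_simp; ring

end VertexForm

lemma SimpleGraph.card_filter_mem_eq_ncard_neighborSet {V : Type*} [DecidableEq V]
    (G : SimpleGraph V) [Fintype G.edgeSet] (u : V) :
    #{e : G.edgeSet | u ∈ (e : Sym2 V)} = (G.neighborSet u).ncard := by
  rw [← Fintype.card_subtype, ← Nat.card_eq_fintype_card, ← Nat.card_coe_set_eq,
    ← Nat.card_congr (G.incidenceSetEquivNeighborSet u)]
  exact Nat.card_congr (Equiv.subtypeSubtypeEquivSubtypeInter (· ∈ G.edgeSet) (u ∈ ·))

section Ricci

variable {V : Type*} [Fintype V] [DecidableEq V] (G : SimpleGraph V)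

lemma ricciMatrix_apply (e f : G.edgeSet) :
    ricciMatrix G e f =
      (∑ u, if u ∈ (e : Sym2 V) ∧ u ∈ (f : Sym2 V)
        then 1 / ((G.neighborSet u).ncard : ℝ) else 0) -
      if e = f then 2 * ∑ u, if u ∈ (e : Sym2 V) then 1 / ((G.neighborSet u).ncard : ℝ) else 0
      else 0 := by
  by_cases hef : e = f
  · subst hef
    simp only [ricciMatrix, ↓reduceIte, one_div, and_self]
    ring
  · simp [ricciMatrix, hef, ← Subtype.ext_iff]

lemma ricciMatrix_isHermitian : (ricciMatrix G).IsHermitian := by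
  ext e f
  rcases eq_or_ne e f with rfl | hef
  · rfl
  · simp [ricciMatrix_apply, hef, hef.symm, and_comm]

lemma dotProduct_ricciMatrix_mulVec [Fintype G.edgeSet] (x : G.edgeSet → ℝ) :
    x ⬝ᵥ ricciMatrix G *ᵥ x = ∑ u, vertexForm {e : G.edgeSet | u ∈ (e : Sym2 V)} x := by
  simp only [vertexForm, G.card_filter_mem_eq_ncard_neighborSet, dotProduct, mulVec,
    ricciMatrix_apply, sub_mul, sum_sub_distrib, mul_sub, sum_mul, mul_sum, sq, sum_filter,
    sub_div, sum_div]
  congr 1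
  · conv_rhs => rw [sum_comm]; enter [2, e]; rw [sum_comm]
    refine sum_congr rfl fun e _ => sum_congr rfl fun f _ => sum_congr rfl fun u _ => ?_
    by_cases he : u ∈ (e : Sym2 V) <;> by_cases hf : u ∈ (f : Sym2 V) <;>
      simp [he, hf, div_eq_inv_mul, mul_comm, mul_assoc]
  · simp only [ite_mul, zero_mul, mul_ite, mul_zero, sum_ite_eq, mem_univ, if_true]
    rw [sum_comm]
    refine sum_congr rfl fun e _ => ?_
    rw [sum_mul, mul_sum]
    refine sum_congr rfl fun u _ => ?_
    split_ifs <;> ring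

end Ricci

section AttachPendant

variable {V : Type*} (G : SimpleGraph V) (v : V)

def pendantEdge : (attachPendant G v).edgeSet := ⟨s(none, some v), rfl⟩

def liftEdge : G.edgeSet ↪ (attachPendant G v).edgeSet where
  toFun e := ⟨Sym2.map some e, by
    obtain ⟨e, he⟩ := e
    induction e using Sym2.ind
    exact he⟩
  inj' _ _ h :=
    Subtype.ext (Sym2.map.injective (Option.some_injective V) (congrArg Subtype.val h))

variable {G v}

@[simp] lemma coe_liftEdge (e : G.edgeSet) :
    (liftEdge G v e : Sym2 (Option V)) = Sym2.map some e := rfl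

@[simp] lemma some_mem_liftEdge {u : V} {e : G.edgeSet} :
    some u ∈ (liftEdge G v e : Sym2 (Option V)) ↔ u ∈ (e : Sym2 V) := by
  simp

@[simp] lemma none_notMem_liftEdge (e : G.edgeSet) :
    none ∉ (liftEdge G v e : Sym2 (Option V)) := by
  simp

@[simp] lemma some_mem_pendantEdge {u : V} :
    some u ∈ (pendantEdge G v : Sym2 (Option V)) ↔ u = v := by
  simp [pendantEdge]

@[simp] lemma none_mem_pendantEdge : none ∈ (pendantEdge G v : Sym2 (Option V)) := by
  simp [pendantEdge]

@[simp] lemma liftEdge_ne_pendantEdge (e : G.edgeSet) : liftEdge G v e ≠ pendantEdge G v :=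
  fun h => none_notMem_liftEdge e (h ▸ none_mem_pendantEdge)

lemma eq_pendantEdge_or_exists_liftEdge (e' : (attachPendant G v).edgeSet) :
    e' = pendantEdge G v ∨ ∃ e, liftEdge G v e = e' := by
  obtain ⟨e', he'⟩ := e'
  induction e' using Sym2.ind with | _ a b => ?_
  rw [SimpleGraph.mem_edgeSet] at he'
  rcases a with _ | a <;> rcases b with _ | b
  · exact he'.elim
  · obtain rfl : b = v := he'
    exact .inl rfl
  · obtain rfl : a = v := he'
    exact .inl (Subtype.ext Sym2.eq_swap)
  · exact .inr ⟨⟨s(a, b), he'⟩, rfl⟩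

noncomputable def extendPendant (x : G.edgeSet → ℝ) (c : ℝ) :
    (attachPendant G v).edgeSet → ℝ :=
  Function.extend (liftEdge G v) x fun _ => c

@[simp] lemma extendPendant_liftEdge (x : G.edgeSet → ℝ) (c : ℝ) (e : G.edgeSet) :
    extendPendant x c (liftEdge G v e) = x e :=
  (liftEdge G v).injective.extend_apply x _ e

lemma extendPendant_comp_liftEdge (x : G.edgeSet → ℝ) (c : ℝ) :
    extendPendant x c ∘ liftEdge G v = x :=
  funext (extendPendant_liftEdge x c)

@[simp] lemma extendPendant_pendantEdge (x : G.edgeSet → ℝ) (c : ℝ) :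
    extendPendant x c (pendantEdge G v) = c :=
  Function.extend_apply' _ _ _ fun ⟨e, he⟩ => liftEdge_ne_pendantEdge e he

variable [Fintype V] [DecidableEq V] [DecidableRel G.Adj]

lemma filter_none_mem_attachPendant :
    ({e' | none ∈ (e' : Sym2 (Option V))} : Finset (attachPendant G v).edgeSet) =
      {pendantEdge G v} := by
  ext e'
  rcases eq_pendantEdge_or_exists_liftEdge e' with rfl | ⟨e, rfl⟩ <;> simp

lemma filter_some_mem_attachPendant_of_ne {u : V} (hu : u ≠ v) :
    ({e' | some u ∈ (e' : Sym2 (Option V))} : Finset (attachPendant G v).edgeSet) =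
      ({e | u ∈ (e : Sym2 V)} : Finset G.edgeSet).map (liftEdge G v) := by
  ext e'
  rcases eq_pendantEdge_or_exists_liftEdge e' with rfl | ⟨e, rfl⟩ <;> simp [hu]

lemma filter_some_self_mem_attachPendant :
    ({e' | some v ∈ (e' : Sym2 (Option V))} : Finset (attachPendant G v).edgeSet) =
      insert (pendantEdge G v)
        (({e | v ∈ (e : Sym2 V)} : Finset G.edgeSet).map (liftEdge G v)) := by
  ext e'
  rcases eq_pendantEdge_or_exists_liftEdge e' with rfl | ⟨e, rfl⟩ <;> simp

lemma exists_le_dotProduct_ricciMatrix_attachPendant_mulVec (x : G.edgeSet → ℝ) :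
    ∃ y, x ⬝ᵥ ricciMatrix G *ᵥ x ≤ y ⬝ᵥ ricciMatrix (attachPendant G v) *ᵥ y := by
  set s : Finset G.edgeSet := {e | v ∈ (e : Sym2 V)}
  set y := extendPendant (v := v) x ((∑ e ∈ s, x e) / (#s + 2))
  have hv : vertexForm s x ≤
      vertexForm (insert (pendantEdge G v) (s.map (liftEdge G v))) y
        + vertexForm {pendantEdge G v} y := by
    have := vertexForm_le_insert_add_singleton (x := y) (s := s.map (liftEdge G v))
      (j := pendantEdge G v) (by simp) (by simp [y])
    rwa [vertexForm_map, extendPendant_comp_liftEdge] at this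
  have hrest : ∀ u ∈ univ.erase v,
      vertexForm {e' : (attachPendant G v).edgeSet | some u ∈ (e' : Sym2 (Option V))} y =
        vertexForm {e : G.edgeSet | u ∈ (e : Sym2 V)} x := fun u hu => by
    rw [filter_some_mem_attachPendant_of_ne (ne_of_mem_erase hu), vertexForm_map,
      extendPendant_comp_liftEdge]
  refine ⟨y, ?_⟩
  rw [dotProduct_ricciMatrix_mulVec, dotProduct_ricciMatrix_mulVec, Fintype.sum_option,
    filter_none_mem_attachPendant, ← add_sum_erase _ _ (mem_univ v),
    ← add_sum_erase _ _ (mem_univ v), filter_some_self_mem_attachPendant, sum_congr rfl hrest]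
  linarith

end AttachPendant

theorem lambdaMax_pos_attachPendant_general {V : Type*} [Fintype V] [DecidableEq V]
    (G : SimpleGraph V) [DecidableRel G.Adj] (v : V)
    (h : 0 < lambdaMax (ricciMatrix G)) :
    0 < lambdaMax (ricciMatrix (attachPendant G v)) := by
  obtain ⟨x, hx⟩ := (lambdaMax_pos_iff (ricciMatrix_isHermitian G)).mp h
  obtain ⟨y, hxy⟩ := exists_le_dotProduct_ricciMatrix_attachPendant_mulVec (v := v) x
  exact (lambdaMax_pos_iff (ricciMatrix_isHermitian _)).mpr ⟨y, hx.trans_le hxy⟩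

/-- **Strict monotonicity of the positive region under leaf attachment.**
If `T'` is obtained from a finite tree `T` by attaching one pendant edge at a vertex `v`
and `λ_max(R_T) > 0`, then `λ_max(R_{T'}) > 0`. -/
theorem lambdaMax_pos_attachPendant {V : Type*} [Fintype V] [DecidableEq V]
    (G : SimpleGraph V) [DecidableRel G.Adj] (hT : G.IsTree) (v : V)
    (h : 0 < lambdaMax (ricciMatrix G)) :
    0 < lambdaMax (ricciMatrix (attachPendant G v)) :=
  lambdaMax_pos_attachPendant_general G v h
end

section
/- Every finite tree that is not a caterpillar contains a connected subtree isomorphic to S_3^2. -/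
open Finset Matrix

/-- A caterpillar is a tree such that deleting all leaves (vertices of degree one)
leaves a path. -/
def IsCaterpillar {V : Type*} (G : SimpleGraph V) : Prop :=
  G.IsTree ∧ ∃ n : ℕ,
    Nonempty (G.induce {v : V | (G.neighborSet v).ncard ≠ 1} ≃g SimpleGraph.pathGraph n)

/-- The defining edge list of `S_3^2`: center `0`, middle vertices `1, 2, 3`,
leaves `4, 5, 6`. -/
def s32Edges : List (Fin 7 × Fin 7) := [(0, 1), (0, 2), (0, 3), (1, 4), (2, 5), (3, 6)]

/-- The tree `S_3^2`, obtained by subdividing each edge of the three-edge star once. -/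
def S32 : SimpleGraph (Fin 7) := SimpleGraph.fromRel (fun a b => (a, b) ∈ s32Edges)

instance : DecidableRel S32.Adj := fun a b =>
  decidable_of_iff (a ≠ b ∧ ((a, b) ∈ s32Edges ∨ (b, a) ∈ s32Edges))
    ((SimpleGraph.fromRel_adj (fun a b => (a, b) ∈ s32Edges) a b).symm.trans
      (by constructor <;> (intro h; exact h)))

/-! If some vertex has three neighbours that are not leaves, each of these has a neighbour
other than the centre, and acyclicity makes the seven vertices distinct: a copy of `S_3^2`.
Otherwise the non-leaves induce a tree (deleting leaves preserves connectivity) of maximum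
degree two. In such a tree a longest path visits every vertex, since a vertex next to it but
off it would either extend it at an end or be a third neighbour of an interior vertex; and a
Hamiltonian path of a tree uses all of its edges (both have `n - 1`), so the tree is a path
graph. -/

namespace SimpleGraph

variable {V : Type*} {G : SimpleGraph V}

lemma exists_adj_ne_of_ncard_neighborSet_ne_one {u v : V} (h : G.Adj v u)
    (hv : (G.neighborSet v).ncard ≠ 1) : ∃ w, G.Adj v w ∧ w ≠ u := by
  by_contra! hall
  exact hv (Set.ncard_eq_one.mpr ⟨u, Set.ext fun w => ⟨hall w, fun hw => hw ▸ h⟩⟩)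

lemma IsAcyclic.nodup_of_adj_of_adj_of_adj_of_adj (hG : G.IsAcyclic) {x₀ x₁ x₂ x₃ x₄ : V}
    (h₀₁ : G.Adj x₀ x₁) (h₁₂ : G.Adj x₁ x₂) (h₂₃ : G.Adj x₂ x₃) (h₃₄ : G.Adj x₃ x₄)
    (h₀₂ : x₀ ≠ x₂) (h₁₃ : x₁ ≠ x₃) (h₂₄ : x₂ ≠ x₄) : [x₀, x₁, x₂, x₃, x₄].Nodup := by
  have hp := (hG.isPath_iff_isChain (.cons h₀₁ (.cons h₁₂ (.cons h₂₃ (.cons h₃₄ .nil))))).2 (by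
    simp [h₀₂, h₁₃, h₂₄, h₀₁.ne, h₁₂.ne, h₂₃.ne, h₃₄.ne])
  exact hp.support_nodup

section S32

variable {v a b c a' b' c' : V}

def s32Hom (ha : G.Adj v a) (hb : G.Adj v b) (hc : G.Adj v c) (ha' : G.Adj a a')
    (hb' : G.Adj b b') (hc' : G.Adj c c') : S32 →g G where
  toFun := ![v, a, b, c, a', b', c']
  map_rel' := by
    rintro x y ⟨-, hxy | hxy⟩ <;>
      simp only [s32Edges, List.mem_cons, Prod.mk.injEq, List.not_mem_nil, or_false] at hxy <;>
      rcases hxy with ⟨rfl, rfl⟩ | ⟨rfl, rfl⟩ | ⟨rfl, rfl⟩ | ⟨rfl, rfl⟩ | ⟨rfl, rfl⟩ | ⟨rfl, rfl⟩ <;>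
      simp [ha, hb, hc, ha', hb', hc', ha.symm, hb.symm, hc.symm, ha'.symm, hb'.symm, hc'.symm]

lemma IsAcyclic.injective_s32Hom (hG : G.IsAcyclic) (ha : G.Adj v a) (hb : G.Adj v b)
    (hc : G.Adj v c) (ha' : G.Adj a a') (hb' : G.Adj b b') (hc' : G.Adj c c')
    (hab : a ≠ b) (hac : a ≠ c) (hbc : b ≠ c) (ha'v : a' ≠ v) (hb'v : b' ≠ v) (hc'v : c' ≠ v) :
    Function.Injective (s32Hom ha hb hc ha' hb' hc') := by
  -- every pair of the seven vertices lies on one of the paths joining two of `a'`, `b'`, `c'`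
  have hab' := hG.nodup_of_adj_of_adj_of_adj_of_adj ha'.symm ha.symm hb hb' ha'v hab hb'v.symm
  have hac' := hG.nodup_of_adj_of_adj_of_adj_of_adj ha'.symm ha.symm hc hc' ha'v hac hc'v.symm
  have hbc' := hG.nodup_of_adj_of_adj_of_adj_of_adj hb'.symm hb.symm hc hc' hb'v hbc hc'v.symm
  rw [← List.nodup_ofFn]
  simp only [List.nodup_cons, List.mem_cons, List.not_mem_nil, or_false] at hab' hac' hbc'
  simp only [s32Hom, RelHom.coeFn_mk, List.ofFn_succ, Fin.isValue, cons_val_zero, cons_val_succ,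
    cons_val_fin_one, List.ofFn_zero, List.nodup_cons, List.mem_cons, List.not_mem_nil, or_false,
    not_or, List.nodup_nil, and_true]
  tauto

lemma IsAcyclic.exists_injective_hom_S32 (hG : G.IsAcyclic) (ha : G.Adj v a)
    (hb : G.Adj v b) (hc : G.Adj v c) (hab : a ≠ b) (hac : a ≠ c) (hbc : b ≠ c)
    (ha₁ : (G.neighborSet a).ncard ≠ 1) (hb₁ : (G.neighborSet b).ncard ≠ 1)
    (hc₁ : (G.neighborSet c).ncard ≠ 1) : ∃ f : S32 →g G, Function.Injective f := by
  obtain ⟨a', ha', ha'v⟩ := exists_adj_ne_of_ncard_neighborSet_ne_one ha.symm ha₁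
  obtain ⟨b', hb', hb'v⟩ := exists_adj_ne_of_ncard_neighborSet_ne_one hb.symm hb₁
  obtain ⟨c', hc', hc'v⟩ := exists_adj_ne_of_ncard_neighborSet_ne_one hc.symm hc₁
  exact ⟨_, hG.injective_s32Hom ha hb hc ha' hb' hc' hab hac hbc ha'v hb'v hc'v⟩

end S32

lemma exists_isPath_forall_isPath_length_le [Finite V] [Nonempty V] :
    ∃ (u v : V) (p : G.Walk u v), p.IsPath ∧
      ∀ (u' v' : V) (q : G.Walk u' v'), q.IsPath → q.length ≤ p.length := by
  classical
  have := Fintype.ofFinite V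
  obtain ⟨w⟩ := ‹Nonempty V›
  obtain ⟨⟨u, v, p⟩, -, hp⟩ := Finset.univ.exists_max_image
    (fun x : Σ u v : V, G.Path u v => x.2.2.1.length) ⟨⟨w, w, Path.nil⟩, Finset.mem_univ _⟩
  exact ⟨u, v, p, p.2, fun u' v' q hq => hp ⟨u', v', ⟨q, hq⟩⟩ (Finset.mem_univ _)⟩

lemma Walk.IsPath.isHamiltonian_of_forall_isPath_length_le [DecidableEq V] [Finite V]
    (hconn : G.Preconnected) (hdeg : ∀ v, (G.neighborSet v).ncard ≤ 2) {u v : V}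
    {p : G.Walk u v} (hp : p.IsPath)
    (hmax : ∀ (u' v' : V) (q : G.Walk u' v'), q.IsPath → q.length ≤ p.length) :
    p.IsHamiltonian := by
  refine hp.isHamiltonian_of_mem fun w => ?_
  by_contra hw
  obtain ⟨⟨⟨s, t⟩, hst⟩, -, hs, ht⟩ :=
    (hconn u w).some.exists_boundary_dart {x | x ∈ p.support} p.start_mem_support hw
  simp only [Set.mem_ofPred_eq] at hs ht
  by_cases hsu : s = u
  · subst hsu
    have := hmax _ _ _ (hp.cons ht (h := hst.symm))
    simp at this
  by_cases hsv : s = v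
  · subst hsv
    have := hmax _ _ _ (hp.concat ht hst)
    simp at this
  obtain ⟨i, rfl, hi⟩ := Walk.mem_support_iff_exists_getVert.mp hs
  have hi0 : i ≠ 0 := by rintro rfl; simp at hsu
  have hil : i < p.length := by
    refine lt_of_le_of_ne hi ?_
    rintro rfl
    simp at hsv
  have hsub : insert t (p.toSubgraph.neighborSet (p.getVert i)) ⊆ G.neighborSet (p.getVert i) :=
    Set.insert_subset hst fun x hx => p.toSubgraph.adj_sub hx
  have ht' : t ∉ p.toSubgraph.neighborSet (p.getVert i) := fun h =>
    ht (p.mem_verts_toSubgraph.mp (p.toSubgraph.edge_vert h.symm))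
  have := Set.ncard_le_ncard hsub
  rw [Set.ncard_insert_of_notMem ht', hp.ncard_neighborSet_toSubgraph_internal_eq_two hi0 hil]
    at this
  linarith [hdeg (p.getVert i)]

lemma Walk.IsHamiltonian.toSubgraph_eq_top [DecidableEq V] [Fintype V] (hG : G.IsAcyclic)
    {u v : V} {p : G.Walk u v} (hp : p.IsHamiltonian) : p.toSubgraph = ⊤ := by
  classical
  have : Nonempty V := ⟨u⟩
  have hT : G.IsTree := ⟨⟨fun x y => ((p.takeUntil x (hp.mem_support x)).reachable.symm.trans
    (p.takeUntil y (hp.mem_support y)).reachable)⟩, hG⟩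
  have hedges : p.edges.toFinset = G.edgeFinset := by
    refine Finset.eq_of_subset_of_card_le (fun e he => ?_) ?_
    · exact G.mem_edgeFinset.mpr (p.edges_subset_edgeSet (List.mem_toFinset.mp he))
    · rw [List.toFinset_card_of_nodup hp.isPath.isTrail.edges_nodup, p.length_edges,
        hp.length_eq]
      have := hT.card_edgeFinset
      omega
  refine Subgraph.ext (Set.eq_univ_of_forall fun x => p.mem_verts_toSubgraph.mpr
    (hp.mem_support x)) ?_
  ext x y
  rw [Walk.adj_toSubgraph_iff_mem_edges, ← List.mem_toFinset, hedges, mem_edgeFinset]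
  rfl

theorem exists_iso_pathGraph_of_ncard_neighborSet_le_two [Finite V] (hconn : G.Preconnected)
    (hG : G.IsAcyclic) (hdeg : ∀ v, (G.neighborSet v).ncard ≤ 2) :
    ∃ n, Nonempty (G ≃g pathGraph n) := by
  classical
  have := Fintype.ofFinite V
  obtain hV | hV := isEmpty_or_nonempty V
  · exact ⟨0, ⟨⟨Equiv.equivOfIsEmpty _ _, fun {x} => isEmptyElim x⟩⟩⟩
  obtain ⟨u, v, p, hp, hmax⟩ := exists_isPath_forall_isPath_length_le (G := G)
  have hH := hp.isHamiltonian_of_forall_isPath_length_le hconn hdeg hmax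
  have e := hp.pathGraphIsoToSubgraph
  rw [hH.toSubgraph_eq_top hG] at e
  exact ⟨_, ⟨Subgraph.topIso.symm.trans e.symm⟩⟩

end SimpleGraph

theorem noncaterpillar_contains_S32_general {V : Type*} [Fintype V]
    (G : SimpleGraph V) (hT : G.IsTree) (hnc : ¬ IsCaterpillar G) :
    ∃ f : S32 →g G, Function.Injective f := by
  by_contra hS
  refine hnc ⟨hT, SimpleGraph.exists_iso_pathGraph_of_ncard_neighborSet_le_two ?_
    (hT.isAcyclic.induce _) ?_⟩
  · refine hT.connected.preconnected.induce_of_degree_eq_one fun v hv => ?_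
    obtain ⟨w, hw⟩ := Set.ncard_eq_one.mp (not_not.mp hv)
    exact hw ▸ Set.subsingleton_singleton
  · rintro ⟨v, -⟩
    by_contra! h
    obtain ⟨⟨a, ha₁⟩, ⟨b, hb₁⟩, ⟨c, hc₁⟩, ha, hb, hc, hab, hac, hbc⟩ := (Set.two_lt_ncard_iff).mp h
    exact hS (hT.isAcyclic.exists_injective_hom_S32 ha hb hc (by simpa using hab)
      (by simpa using hac) (by simpa using hbc) ha₁ hb₁ hc₁)

/-- **Every non-caterpillar tree contains `S_3^2`.**
Every finite tree that is not a caterpillar contains a connected subtree isomorphic to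
`S_3^2`, i.e. there is an injective graph homomorphism from `S_3^2` into it. -/
theorem noncaterpillar_contains_S32 {V : Type*} [Fintype V] [DecidableEq V]
    (G : SimpleGraph V) [DecidableRel G.Adj] (hT : G.IsTree) (hnc : ¬ IsCaterpillar G) :
    ∃ f : S32 →g G, Function.Injective f :=
  noncaterpillar_contains_S32_general G hT hnc
end

section
/- Let w be the edge vector on S_3^2 taking the value 3 on each of the three edges incident to the central vertex and the value 1 on each of the three leaf edges. Then R_{S_3^2} w = 0, and λ_max(R_{S_3^2}) = 0. -/
open Finset Matrix

/-!
Numbering the edges turns `R_{S_3^2}` into an explicit `6 × 6` matrix whose quadratic form is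
`-(1/3) ∑ (x_i - x_j)^2 - (1/6) ∑ (x_i - 3 x_{i+3})^2`, the first sum over pairs of central
edges and the second over a central edge and the leaf edge below it. Hence every eigenvalue is
nonpositive, and the vector `(3, 3, 3, 1, 1, 1)`, on which all these squares vanish, lies in
the kernel.
-/

lemma submatrix_mulVec_comp_equiv {m n α : Type*} [Fintype m] [Fintype n]
    [NonUnitalNonAssocSemiring α] (M : Matrix n n α) (e : m ≃ n) (w : n → α) :
    M.submatrix e e *ᵥ (w ∘ e) = (M *ᵥ w) ∘ e := by
  simp [submatrix_mulVec_equiv, Function.comp_def]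

lemma lambdaMax_eq_zero_of_dotProduct_mulVec_nonpos {n : Type*} [Fintype n]
    {M : Matrix n n ℝ} (hM : ∀ v, v ⬝ᵥ M *ᵥ v ≤ 0) {w : n → ℝ} (hw : w ≠ 0)
    (hMw : M *ᵥ w = 0) : lambdaMax M = 0 := by
  refine IsGreatest.csSup_eq ⟨⟨w, hw, by simp [hMw]⟩, ?_⟩
  rintro t ⟨v, hv, hMv⟩
  have hvv : 0 < v ⬝ᵥ v := by simpa using dotProduct_self_star_pos_iff.mpr hv
  have hvMv := hM v
  rw [hMv, dotProduct_smul, smul_eq_mul] at hvMv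
  exact nonpos_of_mul_nonpos_left hvMv hvv

noncomputable def s32EdgeEquiv : Fin 6 ≃ S32.edgeSet :=
  Equiv.ofBijective
    ![⟨s(0, 1), by decide⟩, ⟨s(0, 2), by decide⟩, ⟨s(0, 3), by decide⟩,
      ⟨s(1, 4), by decide⟩, ⟨s(2, 5), by decide⟩, ⟨s(3, 6), by decide⟩]
    (by decide)

lemma ncard_neighborSet_S32 (v : Fin 7) :
    (S32.neighborSet v).ncard = ![3, 2, 2, 2, 1, 1, 1] v := by
  rw [Set.ncard_eq_toFinset_card']
  fin_cases v <;> decide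

noncomputable def s32Ricci : Matrix (Fin 6) (Fin 6) ℝ :=
  !![-5/6, 1/3, 1/3, 1/2, 0, 0;
     1/3, -5/6, 1/3, 0, 1/2, 0;
     1/3, 1/3, -5/6, 0, 0, 1/2;
     1/2, 0, 0, -3/2, 0, 0;
     0, 1/2, 0, 0, -3/2, 0;
     0, 0, 1/2, 0, 0, -3/2]

lemma ricciMatrix_S32_submatrix :
    (ricciMatrix S32).submatrix s32EdgeEquiv s32EdgeEquiv = s32Ricci := by
  ext i j
  fin_cases i <;> fin_cases j <;>
    simp [ricciMatrix, s32EdgeEquiv, s32Ricci, Fin.sum_univ_seven, ncard_neighborSet_S32] <;>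
    norm_num

lemma s32Ricci_mulVec : s32Ricci *ᵥ ![3, 3, 3, 1, 1, 1] = 0 := by
  ext i
  fin_cases i <;> simp [s32Ricci, mulVec, dotProduct, Fin.sum_univ_six] <;> norm_num

lemma dotProduct_s32Ricci_mulVec (v : Fin 6 → ℝ) :
    v ⬝ᵥ s32Ricci *ᵥ v =
      -(((v 0 - v 1) ^ 2 + (v 0 - v 2) ^ 2 + (v 1 - v 2) ^ 2) / 3
        + ((v 0 - 3 * v 3) ^ 2 + (v 1 - 3 * v 4) ^ 2 + (v 2 - 3 * v 5) ^ 2) / 6) := by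
  simp only [dotProduct, mulVec, s32Ricci, of_apply, cons_val', cons_val_fin_one,
    Fin.sum_univ_six, cons_val_zero, cons_val_one, Matrix.cons_val]
  ring

lemma dotProduct_ricciMatrix_S32_mulVec_nonpos (w : S32.edgeSet → ℝ) :
    w ⬝ᵥ ricciMatrix S32 *ᵥ w ≤ 0 := by
  rw [← comp_equiv_dotProduct_comp_equiv (e := s32EdgeEquiv), ← submatrix_mulVec_comp_equiv,
    ricciMatrix_S32_submatrix, dotProduct_s32Ricci_mulVec]
  exact neg_nonpos.mpr (by positivity)

lemma ricciMatrix_S32_mulVec :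
    ricciMatrix S32 *ᵥ (fun e => if (0 : Fin 7) ∈ (e : Sym2 (Fin 7)) then (3 : ℝ) else 1) = 0 := by
  set w : S32.edgeSet → ℝ := fun e => if (0 : Fin 7) ∈ (e : Sym2 (Fin 7)) then 3 else 1
  have hw : w ∘ s32EdgeEquiv = ![3, 3, 3, 1, 1, 1] := by
    ext i
    fin_cases i <;> simp [w, s32EdgeEquiv]
  apply s32EdgeEquiv.surjective.injective_comp_right
  change (ricciMatrix S32 *ᵥ w) ∘ s32EdgeEquiv = 0
  rw [← submatrix_mulVec_comp_equiv, hw, ricciMatrix_S32_submatrix, s32Ricci_mulVec]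

/-- **The null vector of `S_3^2`.**
The edge vector taking the value `3` on the three edges incident to the central vertex
and `1` on the three leaf edges satisfies `R_{S_3^2} w = 0`, and
`λ_max(R_{S_3^2}) = 0`. -/
theorem S32_null_vector :
    (ricciMatrix S32).mulVec
        (fun e => if (0 : Fin 7) ∈ (e : Sym2 (Fin 7)) then (3 : ℝ) else 1) = 0 ∧
    lambdaMax (ricciMatrix S32) = 0 :=
  ⟨ricciMatrix_S32_mulVec, lambdaMax_eq_zero_of_dotProduct_mulVec_nonpos
    dotProduct_ricciMatrix_S32_mulVec_nonpos
    (Function.ne_iff.mpr ⟨s32EdgeEquiv 0, by simp [s32EdgeEquiv]⟩) ricciMatrix_S32_mulVec⟩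
end

section
/- Let T be an infinite, locally finite tree (a connected acyclic simple graph with infinitely many vertices in which every vertex has finite degree). Then for every ε > 0 there exists a finitely supported real-valued edge function f ≠ 0 with ⟨f, R_T f⟩ ≥ −ε·⟨f, f⟩; equivalently, the supremum over nonzero finitely supported edge functions f of the Rayleigh quotient ⟨f, R_T f⟩ / ⟨f, f⟩ is at least 0. -/
/-!
Along a path `w₀ … w_L` the indicator `f` of its edges has `⟨f, f⟩ = L`, and `⟨f, R f⟩`
telescopes: an interior vertex `w_i` contributes `-2/d_{w_i}` through the diagonal entries of its
two path edges and `+2/d_{w_i}` through the off-diagonal entries between them, so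
`⟨f, R f⟩ = -(1/d_{w₀} + 1/d_{w_L}) ≥ -2`. Balls in a connected locally finite graph are finite,
so an infinite one has paths of every length, and a path with `L ≥ 2/ε` does the job.
-/

open Finset

open Classical in
/-- The entry of the Ricci matrix of a (possibly infinite) graph at a pair of edges:
`-(1/d_x + 1/d_y)` for `e = f = {x,y}`, `1/d_z` if the distinct edges `e, f` share the
vertex `z`, and `0` if they are disjoint.  The degree of `v` is
`(G.neighborSet v).ncard`. -/
noncomputable def ricciEntry {V : Type*} (G : SimpleGraph V) (e f : Sym2 V) : ℝ :=
  if e = f then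
    -(Sym2.lift ⟨fun x y =>
        1 / ((G.neighborSet x).ncard : ℝ) + 1 / ((G.neighborSet y).ncard : ℝ),
      fun _ _ => by ring⟩ e)
  else
    Sym2.lift ⟨fun x y =>
        (if x ∈ f then 1 / ((G.neighborSet x).ncard : ℝ) else 0) +
        (if y ∈ f then 1 / ((G.neighborSet y).ncard : ℝ) else 0),
      fun _ _ => add_comm _ _⟩ e

namespace SimpleGraph

variable {V : Type*} {G : SimpleGraph V}

theorem finite_setOf_exists_walk_length_le (hlf : ∀ v : V, (G.neighborSet v).Finite) (n : ℕ) :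
    ∀ u : V, {v | ∃ p : G.Walk u v, p.length ≤ n}.Finite := by
  induction n with
  | zero =>
    intro u
    refine (Set.finite_singleton u).subset ?_
    rintro v ⟨p, hp⟩
    exact (Walk.eq_of_length_eq_zero (Nat.le_zero.mp hp)).symm
  | succ n ih =>
    intro u
    refine ((Set.finite_singleton u).union ((hlf u).biUnion fun w _ => ih w)).subset ?_
    rintro v ⟨p, hp⟩
    cases p with
    | nil => exact Or.inl rfl
    | cons h q =>
      rw [Walk.length_cons] at hp
      exact Or.inr (Set.mem_biUnion h ⟨q, by omega⟩)

theorem Connected.exists_isPath_length_ge [Infinite V] (hc : G.Connected)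
    (hlf : ∀ v : V, (G.neighborSet v).Finite) (u : V) (n : ℕ) :
    ∃ (v : V) (p : G.Walk u v), p.IsPath ∧ n ≤ p.length := by
  classical
  obtain ⟨v, hv⟩ := (finite_setOf_exists_walk_length_le hlf n u).exists_notMem
  let p := (hc u v).some.bypass
  refine ⟨v, p, Walk.bypass_isPath _, ?_⟩
  by_contra! hlen
  exact hv ⟨p, hlen.le⟩

end SimpleGraph

section Ricci

variable {V : Type*} (G : SimpleGraph V)

noncomputable def invDegree (v : V) : ℝ := 1 / ((G.neighborSet v).ncard : ℝ)

theorem invDegree_le_one (v : V) : invDegree G v ≤ 1 := by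
  simpa [invDegree] using Nat.cast_inv_le_one _

theorem ricciEntry_self (x y : V) :
    ricciEntry G s(x, y) s(x, y) = -(invDegree G x + invDegree G y) := by
  simp [ricciEntry, invDegree]

variable {G}

theorem ricciEntry_eq_zero_of_disjoint {e f : Sym2 V} (h : ∀ z ∈ e, z ∉ f) :
    ricciEntry G e f = 0 := by
  induction e using Sym2.ind with
  | _ x y =>
    have hne : s(x, y) ≠ f := fun hf => h x (Sym2.mem_mk_left x y) (hf ▸ Sym2.mem_mk_left x y)
    simp [ricciEntry, hne, h x (Sym2.mem_mk_left x y), h y (Sym2.mem_mk_right x y)]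

theorem ricciEntry_mk_mk {x y z : V} (hxy : x ≠ y) (hxz : x ≠ z) :
    ricciEntry G s(x, y) s(y, z) = invDegree G y := by
  have hne : s(x, y) ≠ s(y, z) := by simp [hxy, hxz]
  simp [ricciEntry, invDegree, hne, hxy, hxz]

end Ricci

theorem Finset.sum_sum_insert {α M : Type*} [DecidableEq α] [AddCommMonoid M] {s : Finset α}
    {a : α} (ha : a ∉ s) (F : α → α → M) :
    ∑ x ∈ insert a s, ∑ y ∈ insert a s, F x y =
      F a a + ∑ y ∈ s, F a y + ∑ x ∈ s, F x a + ∑ x ∈ s, ∑ y ∈ s, F x y := by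
  simp only [sum_insert ha, sum_add_distrib]
  abel

namespace SimpleGraph.Walk

variable {V : Type*} {G : SimpleGraph V}

theorem IsPath.sum_sum_ricciEntry_edges [DecidableEq V] {u v : V} {p : G.Walk u v}
    (hp : p.IsPath) (hnil : ¬ p.Nil) :
    ∑ e ∈ p.edges.toFinset, ∑ e' ∈ p.edges.toFinset, ricciEntry G e e' =
      -(invDegree G u + invDegree G v) := by
  induction p with
  | nil => exact absurd Walk.Nil.nil hnil
  | @cons a b _ hab q ih =>
    cases q with
    | nil => simp [ricciEntry_self]
    | @cons _ c _ hbc r =>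
      obtain ⟨hq, ha⟩ := (cons_isPath_iff _ _).mp hp
      obtain ⟨-, hb⟩ := (cons_isPath_iff _ _).mp hq
      have hab_notin : s(a, b) ∉ (cons hbc r).edges.toFinset := fun h =>
        ha (mem_support_of_mem_edges (List.mem_toFinset.mp h) (Sym2.mem_mk_left a b))
      have hbc_notin : s(b, c) ∉ r.edges.toFinset := fun h =>
        hb (mem_support_of_mem_edges (List.mem_toFinset.mp h) (Sym2.mem_mk_left b c))
      simp only [support_cons, List.mem_cons, not_or] at ha
      have hac : a ≠ c := fun h => ha.2 (h ▸ r.start_mem_support)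
      have hfar : ∀ e ∈ r.edges.toFinset, ∀ z ∈ e, z ∉ s(a, b) := by
        intro e he z hz
        have hzr := mem_support_of_mem_edges (List.mem_toFinset.mp he) hz
        rw [Sym2.mem_iff]
        rintro (rfl | rfl)
        exacts [ha.2 hzr, hb hzr]
      have hrow : ∑ e ∈ (cons hbc r).edges.toFinset, ricciEntry G s(a, b) e = invDegree G b := by
        rw [edges_cons, List.toFinset_cons, sum_insert hbc_notin,
          ricciEntry_mk_mk hab.ne hac, sum_eq_zero, add_zero]
        exact fun e he => ricciEntry_eq_zero_of_disjoint fun z hz hze => hfar e he z hze hz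
      have hcol : ∑ e ∈ (cons hbc r).edges.toFinset, ricciEntry G e s(a, b) = invDegree G b := by
        have hcb : ricciEntry G s(b, c) s(a, b) = invDegree G b := by
          rw [Sym2.eq_swap, Sym2.eq_swap (a := a)]
          exact ricciEntry_mk_mk hbc.ne.symm hac.symm
        rw [edges_cons, List.toFinset_cons, sum_insert hbc_notin, hcb, sum_eq_zero,
          add_zero]
        exact fun e he => ricciEntry_eq_zero_of_disjoint (hfar e he)
      rw [edges_cons, List.toFinset_cons, Finset.sum_sum_insert hab_notin, hrow, hcol,
        ih hq not_nil_cons, ricciEntry_self]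
      ring

end SimpleGraph.Walk

theorem Finsupp.exists_subtype_indicator {α : Type*} {p : α → Prop} (S : Finset α)
    (hS : ∀ x ∈ S, p x) :
    ∃ f : Subtype p →₀ ℝ, ∑ x ∈ f.support, f x ^ 2 = #S ∧
      ∀ F : α → α → ℝ, ∑ x ∈ f.support, ∑ y ∈ f.support, f x * F x y * f y =
        ∑ x ∈ S, ∑ y ∈ S, F x y := by
  classical
  let f : Subtype p →₀ ℝ := Finsupp.indicator (S.subtype p) fun _ _ => 1
  have hsupp : f.support = S.subtype p := by
    ext x
    simp [f, Finsupp.indicator_apply]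
  have hone : ∀ x ∈ f.support, f x = 1 := fun x hx =>
    Finsupp.indicator_of_mem (hsupp ▸ hx) _
  have hmap : f.support.map (Function.Embedding.subtype p) = S := by
    rw [hsupp, subtype_map_of_mem hS]
  refine ⟨f, ?_, fun F => ?_⟩
  · rw [Finset.sum_congr rfl fun x hx => by rw [hone x hx, one_pow], ← hmap, card_map]
    simp
  · rw [← hmap, sum_map]
    refine Finset.sum_congr rfl fun x hx => ?_
    rw [sum_map]
    exact Finset.sum_congr rfl fun y hy => by rw [hone x hx, hone y hy, one_mul, mul_one]; rfl

/-- **Infinite locally finite trees have nonnegative spectral top.**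
If `T` is an infinite locally finite tree, then for every `ε > 0` there is a nonzero
finitely supported edge function `f` with `⟨f, R_T f⟩ ≥ −ε ⟨f, f⟩`. -/
theorem infinite_tree_rayleigh_nonneg {V : Type*} [Infinite V] (G : SimpleGraph V)
    (hT : G.IsTree) (hlf : ∀ v : V, (G.neighborSet v).Finite)
    (ε : ℝ) (hε : 0 < ε) :
    ∃ f : G.edgeSet →₀ ℝ, f ≠ 0 ∧
      -(ε * ∑ e ∈ f.support, (f e) ^ 2) ≤
        ∑ e ∈ f.support, ∑ e' ∈ f.support,
          f e * ricciEntry G (e : Sym2 V) (e' : Sym2 V) * f e' := by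
  classical
  obtain ⟨u⟩ := ‹Infinite V›.nonempty
  obtain ⟨v, p, hp, hlen⟩ := hT.connected.exists_isPath_length_ge hlf u ⌈2 / ε⌉₊
  have hεL : 2 ≤ ε * p.length := by
    have := (Nat.le_ceil (2 / ε)).trans (Nat.cast_le.mpr hlen)
    rwa [div_le_iff₀' hε] at this
  have hpos : 0 < p.length := Nat.pos_of_ne_zero fun h => by norm_num [h] at hεL
  have hcard : #p.edges.toFinset = p.length := by
    rw [List.toFinset_card_of_nodup hp.edges_nodup, p.length_edges]
  obtain ⟨f, hnorm, hform⟩ := Finsupp.exists_subtype_indicator p.edges.toFinset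
    fun e he => p.edges_subset_edgeSet (List.mem_toFinset.mp he)
  refine ⟨f, ?_, ?_⟩
  · rintro rfl
    rw [Finsupp.support_zero, sum_empty, hcard] at hnorm
    exact hpos.ne (mod_cast hnorm)
  · rw [hnorm, hform, hcard,
      hp.sum_sum_ricciEntry_edges (SimpleGraph.Walk.not_nil_iff_lt_length.mpr hpos)]
    linarith [invDegree_le_one G u, invDegree_le_one G v]
end
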